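/- arXiv:2105.06996 — 6 statements merged into one kernel-verified Lean document; each statement's English description precedes it below -/
import Mathlib

section
/- Let w be a nonempty finite word (list) over the two symbols {b, c}. Define the operator A_w by starting from the diagonal matrix C' and applying, for each symbol of w read in order, the superoperator ∇ (for symbol b) or ∇_C (for symbol c). Then: (i) every entry of A_w with respect to the computational basis is real; (ii) A_w has trace zero; (iii) if the length of w is even then A_w is Hermitian (A_wᴴ = A_w), while if the length of w is odd then A_w is skew-Hermitian (A_wᴴ = −A_w). -/
open Matrix Asymptotics

noncomputable section

abbrev Bits (n : ℕ) := Fin n → Bool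

/-- `x` with bit `j` flipped. -/
def flipBit {n : ℕ} (j : Fin n) (x : Bits n) : Bits n := Function.update x j (!x j)

/-- The bit-flip operator `X_j`. -/
def Xop {n : ℕ} (j : Fin n) : Matrix (Bits n) (Bits n) ℂ :=
  fun x y => if y = flipBit j x then 1 else 0

/-- The transverse-field mixing Hamiltonian `B = ∑ⱼ Xⱼ`. -/
def Bop (n : ℕ) : Matrix (Bits n) (Bits n) ℂ := ∑ j : Fin n, Xop j

/-- The cost Hamiltonian: diagonal matrix with entries `c x`. -/
def Cop {n : ℕ} (c : Bits n → ℝ) : Matrix (Bits n) (Bits n) ℂ :=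
  Matrix.diagonal fun x => (c x : ℂ)

/-- The gradient superoperator `∇A = [B, A]`. -/
def gradB {n : ℕ} (A : Matrix (Bits n) (Bits n) ℂ) : Matrix (Bits n) (Bits n) ℂ :=
  Bop n * A - A * Bop n

/-- The gradient with respect to the cost Hamiltonian `∇_C A = [C, A]`. -/
def gradC {n : ℕ} (c : Bits n → ℝ) (A : Matrix (Bits n) (Bits n) ℂ) :
    Matrix (Bits n) (Bits n) ℂ :=
  Cop c * A - A * Cop c

/-- The uniform superposition state `|s⟩`, every entry `(2^n)^{-1/2}`. -/
def sVec (n : ℕ) : Bits n → ℂ := fun _ => ((Real.sqrt (2 ^ n))⁻¹ : ℝ)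

/-- Initial-state expectation value `⟨A⟩₀ = ⟨s|A|s⟩`. -/
def expect0 {n : ℕ} (A : Matrix (Bits n) (Bits n) ℂ) : ℂ :=
  star (sVec n) ⬝ᵥ (A *ᵥ sVec n)

/-- Partial cost difference `∂ⱼc(x) = c(x⁽ʲ⁾) − c(x)`. -/
def pd {n : ℕ} (c : Bits n → ℝ) (j : Fin n) (x : Bits n) : ℝ := c (flipBit j x) - c x

/-- Cost divergence `dc(x) = ∑ⱼ ∂ⱼc(x)`. -/
def dcFun {n : ℕ} (c : Bits n → ℝ) (x : Bits n) : ℝ := ∑ j : Fin n, pd c j x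

/-- The two symbols of the word: `b` stands for applying `∇ = [B,·]`,
`c` stands for applying `∇_C = [C,·]`. -/
inductive GradSym : Type
  | b : GradSym
  | c : GradSym

/-- Apply the superoperators corresponding to the symbols of `w`, read in order,
starting from the matrix `A`. -/
def applyWord {n : ℕ} (c : Bits n → ℝ) (w : List GradSym)
    (A : Matrix (Bits n) (Bits n) ℂ) : Matrix (Bits n) (Bits n) ℂ :=
  w.foldl (fun M s => match s with
    | GradSym.b => gradB M
    | GradSym.c => gradC c M) A

/-! Both generators `B` and `C` are real symmetric matrices. Bracketing with a real matrix keeps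
a matrix real, and bracketing with a Hermitian `H` turns `Aᴴ = ε A` into `⁅H, A⁆ᴴ = -ε ⁅H, A⁆`, so
starting from the real diagonal `C'` every letter of `w` flips the sign. The last letter makes
`A_w` a commutator, hence traceless. -/

theorem Ring.star_lie_of_star_eq_zsmul {R : Type*} [Ring R] [StarRing R] {h a : R}
    (hh : IsSelfAdjoint h) {ε : ℤ} (ha : star a = ε • a) : star ⁅h, a⁆ = (-ε) • ⁅h, a⁆ := by
  rw [Ring.lie_def, star_sub, star_mul, star_mul, hh.star_eq, ha, smul_mul_assoc, mul_smul_comm,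
    neg_smul, smul_sub]
  abel

theorem RingHom.map_lie_of_map_eq {R : Type*} [Ring R] (f : R →+* R) {h a : R} (hh : f h = h)
    (ha : f a = a) : f ⁅h, a⁆ = ⁅h, a⁆ := by
  rw [Ring.lie_def, map_sub, map_mul, map_mul, hh, ha]

theorem Matrix.trace_lie {ι R : Type*} [Fintype ι] [CommRing R] (A B : Matrix ι ι R) :
    trace ⁅A, B⁆ = 0 := by
  rw [Ring.lie_def, trace_sub, trace_mul_comm, sub_self]

theorem Matrix.IsHermitian.of_map_star_eq {ι α : Type*} [Star α] {A : Matrix ι ι α}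
    (hA : A.map star = A) (hsymm : A.IsSymm) : A.IsHermitian := by
  change Aᵀ.map star = A
  rw [transpose_map, hA]
  exact hsymm

theorem flipBit_flipBit {n : ℕ} (j : Fin n) (x : Bits n) : flipBit j (flipBit j x) = x := by
  simp [flipBit]

theorem Xop_isSymm {n : ℕ} (j : Fin n) : (Xop j).IsSymm := by
  ext x y
  have h : x = flipBit j y ↔ y = flipBit j x :=
    ⟨fun h => h ▸ (flipBit_flipBit j y).symm, fun h => h ▸ (flipBit_flipBit j x).symm⟩
  simp [Xop, h]

theorem Xop_map_star {n : ℕ} (j : Fin n) : (Xop j).map star = Xop j := by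
  ext x y
  simp only [map_apply, Xop]
  split_ifs <;> simp

theorem Bop_map_star (n : ℕ) : (Bop n).map star = Bop n := by
  change (starRingEnd ℂ).mapMatrix (∑ j, Xop j) = _
  rw [map_sum]
  exact Finset.sum_congr rfl fun j _ => Xop_map_star j

theorem Bop_isHermitian (n : ℕ) : (Bop n).IsHermitian :=
  .of_map_star_eq (Bop_map_star n)
    (Finset.sum_induction _ IsSymm (fun _ _ => IsSymm.add) isSymm_zero fun j _ => Xop_isSymm j)

theorem Cop_map_star {n : ℕ} (c : Bits n → ℝ) : (Cop c).map star = Cop c := by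
  simp [Cop, diagonal_map]

theorem Cop_isHermitian {n : ℕ} (c : Bits n → ℝ) : (Cop c).IsHermitian :=
  .of_map_star_eq (Cop_map_star c) (isSymm_diagonal _)

def GradSym.hamiltonian {n : ℕ} (c : Bits n → ℝ) : GradSym → Matrix (Bits n) (Bits n) ℂ
  | .b => Bop n
  | .c => Cop c

namespace GradSym

variable {n : ℕ} (c : Bits n → ℝ)

theorem hamiltonian_isHermitian (s : GradSym) : (s.hamiltonian c).IsHermitian := by
  cases s
  exacts [Bop_isHermitian n, Cop_isHermitian c]

theorem hamiltonian_map_star (s : GradSym) : (s.hamiltonian c).map star = s.hamiltonian c := by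
  cases s
  exacts [Bop_map_star n, Cop_map_star c]

end GradSym

section applyWord

variable {n : ℕ} (c : Bits n → ℝ)

theorem applyWord_cons (s : GradSym) (w : List GradSym) (A : Matrix (Bits n) (Bits n) ℂ) :
    applyWord c (s :: w) A = applyWord c w ⁅s.hamiltonian c, A⁆ := by
  cases s <;> rfl

theorem applyWord_concat (w : List GradSym) (s : GradSym) (A : Matrix (Bits n) (Bits n) ℂ) :
    applyWord c (w ++ [s]) A = ⁅s.hamiltonian c, applyWord c w A⁆ := by
  rw [applyWord, List.foldl_concat]
  cases s <;> rfl

theorem map_applyWord_eq (f : Matrix (Bits n) (Bits n) ℂ →+* Matrix (Bits n) (Bits n) ℂ)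
    (hf : ∀ s : GradSym, f (s.hamiltonian c) = s.hamiltonian c) (w : List GradSym)
    {A : Matrix (Bits n) (Bits n) ℂ} (hA : f A = A) : f (applyWord c w A) = applyWord c w A := by
  induction w generalizing A with
  | nil => exact hA
  | cons s w ih =>
    rw [applyWord_cons]
    exact ih (f.map_lie_of_map_eq (hf s) hA)

theorem star_applyWord (w : List GradSym) {A : Matrix (Bits n) (Bits n) ℂ} {ε : ℤ}
    (hA : star A = ε • A) : star (applyWord c w A) = ((-1) ^ w.length * ε) • applyWord c w A := by
  induction w generalizing A ε with
  | nil => rwa [List.length_nil, pow_zero, one_mul]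
  | cons s w ih =>
    rw [applyWord_cons, ih (Ring.star_lie_of_star_eq_zsmul (s.hamiltonian_isHermitian c) hA),
      List.length_cons, pow_succ]
    ring_nf

theorem trace_applyWord {w : List GradSym} (hw : w ≠ []) (A : Matrix (Bits n) (Bits n) ℂ) :
    trace (applyWord c w A) = 0 := by
  rw [← List.dropLast_append_getLast hw, applyWord_concat, trace_lie]

end applyWord

theorem stmt0_general (n : ℕ) (c c' : Bits n → ℝ) (w : List GradSym) (hw : w ≠ []) :
    (∀ x y : Bits n, ∃ r : ℝ, applyWord c w (Cop c') x y = (r : ℂ)) ∧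
    Matrix.trace (applyWord c w (Cop c')) = 0 ∧
    (Even w.length → (applyWord c w (Cop c'))ᴴ = applyWord c w (Cop c')) ∧
    (Odd w.length → (applyWord c w (Cop c'))ᴴ = -applyWord c w (Cop c')) := by
  have hreal := map_applyWord_eq c (starRingEnd ℂ).mapMatrix
    (GradSym.hamiltonian_map_star c) w (Cop_map_star c')
  have hstar := star_applyWord c w (ε := 1) (by rw [one_smul]; exact Cop_isHermitian c')
  rw [mul_one, star_eq_conjTranspose] at hstar
  refine ⟨fun x y => Complex.conj_eq_iff_real.mp (congrFun₂ hreal x y), trace_applyWord c hw _,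
    fun he => ?_, fun ho => ?_⟩
  · rw [hstar, he.neg_one_pow, one_smul]
  · rw [hstar, ho.neg_one_pow, neg_one_smul]

theorem stmt0 (n : ℕ) (hn : 1 ≤ n) (c c' : Bits n → ℝ) (w : List GradSym) (hw : w ≠ []) :
    (∀ x y : Bits n, ∃ r : ℝ, applyWord c w (Cop c') x y = (r : ℂ)) ∧
    Matrix.trace (applyWord c w (Cop c')) = 0 ∧
    (Even w.length → (applyWord c w (Cop c'))ᴴ = applyWord c w (Cop c')) ∧
    (Odd w.length → (applyWord c w (Cop c'))ᴴ = -applyWord c w (Cop c')) :=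
  stmt0_general n c c' w hw
end
end

section
/- (First order in the mixing angle, arbitrary phase angle.) For every cost function c : (Fin n → Bool) → ℝ, every real γ, and every bitstring x: the function β ↦ P₁(x;γ,β) is differentiable at β = 0 with derivative −(2/2^n)·∑_{j} sin(γ·∂_j c(x)); consequently the function β ↦ ⟨C⟩₁(γ,β) is differentiable at β = 0 with derivative −(2/2^n)·∑_x c(x)·∑_{j} sin(γ·∂_j c(x)). -/
open Matrix Asymptotics

noncomputable section

/-- The QAOA₁ operator `Q(γ,β) = exp(−iβB)·exp(−iγC)`. -/
def Qaoa1 {n : ℕ} (c : Bits n → ℝ) (γ β : ℝ) : Matrix (Bits n) (Bits n) ℂ :=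
  NormedSpace.exp ((-(Complex.I * (β : ℂ))) • Bop n) *
    NormedSpace.exp ((-(Complex.I * (γ : ℂ))) • Cop c)

/-- Probability of measuring the bitstring `x` in the QAOA₁ state. -/
def P1 {n : ℕ} (c : Bits n → ℝ) (x : Bits n) (γ β : ℝ) : ℝ :=
  ‖(Qaoa1 c γ β *ᵥ sVec n) x‖ ^ 2

/-- The QAOA₁ cost expectation value `⟨C⟩₁(γ,β)`. -/
def expC1 {n : ℕ} (c : Bits n → ℝ) (γ β : ℝ) : ℝ :=
  (star (Qaoa1 c γ β *ᵥ sVec n) ⬝ᵥ (Cop c *ᵥ (Qaoa1 c γ β *ᵥ sVec n))).re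

/-! At `β = 0` the QAOA₁ state is `w := exp(-iγC) s`, with entries `w y = e^{-iγ c(y)} / √2ⁿ`,
and `exp(-iβB)` has derivative `-iB`, which sends `w` to `x ↦ -i ∑ⱼ w (x⁽ʲ⁾)`. Hence
`d/dβ |ψ_x|² = 2 Re(conj (w x) · (-i) ∑ⱼ w (x⁽ʲ⁾))`, and each phase difference
`e^{iγ (c(x) - c(x⁽ʲ⁾))}` contributes `-sin(γ ∂ⱼc(x)) / 2ⁿ`. As `C` is diagonal,
`⟨C⟩₁ = ∑ₓ c(x) P₁(x)`, so the second formula follows by linearity. -/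

section

variable {ι : Type*} [Fintype ι] [DecidableEq ι]

theorem hasDerivAt_exp_neg_I_smul_mulVec (A : Matrix ι ι ℂ) (w : ι → ℂ) :
    HasDerivAt (fun β : ℝ => NormedSpace.exp ((-(Complex.I * β)) • A) *ᵥ w)
      (-Complex.I • (A *ᵥ w)) 0 := by
  -- `Matrix` has no global norm; any submultiplicative one makes `exp` differentiable.
  let _ : NormedRing (Matrix ι ι ℂ) := Matrix.linftyOpNormedRing
  let _ : NormedAlgebra ℝ (Matrix ι ι ℂ) := Matrix.linftyOpNormedAlgebra
  have hexp := hasDerivAt_exp_smul_const (𝕂 := ℝ) (-Complex.I • A) 0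
  rw [zero_smul, NormedSpace.exp_zero, one_mul] at hexp
  let L : Matrix ι ι ℂ →L[ℝ] ι → ℂ :=
    LinearMap.toContinuousLinearMap ((Matrix.mulVecBilin ℝ ℂ).flip w)
  have hfun : (fun β : ℝ => NormedSpace.exp ((-(Complex.I * β)) • A) *ᵥ w)
      = L ∘ fun β : ℝ => NormedSpace.exp (β • (-Complex.I • A)) := by
    ext β : 1
    change _ = NormedSpace.exp (β • -Complex.I • A) *ᵥ w
    rw [← smul_assoc, Complex.real_smul, mul_neg, mul_comm]
  rw [hfun]
  exact (L.hasFDerivAt.comp_hasDerivAt 0 hexp).congr_deriv (Matrix.smul_mulVec _ _ _)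

theorem re_star_dotProduct_diagonal_mulVec (d : ι → ℝ) (v : ι → ℂ) :
    (star v ⬝ᵥ (Matrix.diagonal (fun i => (d i : ℂ)) *ᵥ v)).re = ∑ i, d i * ‖v i‖ ^ 2 := by
  simp only [dotProduct, Matrix.mulVec_diagonal, Complex.re_sum]
  refine Finset.sum_congr rfl fun i _ => ?_
  rw [Pi.star_apply, mul_left_comm, Complex.star_def, Complex.conj_mul', ← Complex.ofReal_pow,
    ← Complex.ofReal_mul, Complex.ofReal_re]

theorem exp_neg_I_smul_diagonal (d : ι → ℝ) (t : ℝ) :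
    NormedSpace.exp ((-(Complex.I * t)) • Matrix.diagonal (fun i => (d i : ℂ)))
      = Matrix.diagonal (fun i => Complex.exp (-(Complex.I * (t * d i : ℝ)))) := by
  rw [← Matrix.diagonal_smul, Matrix.exp_diagonal]
  congr 1
  ext i
  simp [Pi.coe_exp, ← Complex.exp_eq_exp_ℂ, mul_assoc]

end

theorem inner_exp_neg_I_mul_exp (a b : ℝ) :
    inner ℝ (Complex.exp (-(Complex.I * a))) (-Complex.I * Complex.exp (-(Complex.I * b)))
      = -Real.sin (b - a) := by
  rw [Complex.inner, ← Complex.exp_conj, mul_assoc, ← Complex.exp_add,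
    show -(Complex.I * b) + (starRingEnd ℂ) (-(Complex.I * a)) = ((a - b : ℝ) : ℂ) * Complex.I by
      simp only [map_neg, map_mul, Complex.conj_I, Complex.conj_ofReal, neg_mul, neg_neg,
        Complex.ofReal_sub]
      ring]
  simp only [neg_mul, Complex.neg_re, Complex.mul_re, Complex.I_re, Complex.I_im,
    Complex.exp_ofReal_mul_I_re, Complex.exp_ofReal_mul_I_im]
  rw [← neg_sub b a, Real.sin_neg]
  ring

theorem Bop_mulVec {n : ℕ} (w : Bits n → ℂ) (x : Bits n) :
    (Bop n *ᵥ w) x = ∑ j : Fin n, w (flipBit j x) := by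
  simp only [Bop, Matrix.mulVec, dotProduct, Matrix.sum_apply, Finset.sum_mul, Xop,
    ite_mul, one_mul, zero_mul]
  rw [Finset.sum_comm]
  simp

section

variable {n : ℕ}

def phaseState (c : Bits n → ℝ) (γ : ℝ) : Bits n → ℂ :=
  fun y => (Real.sqrt (2 ^ n))⁻¹ • Complex.exp (-(Complex.I * (γ * c y : ℝ)))

theorem exp_Cop_mulVec_sVec (c : Bits n → ℝ) (γ : ℝ) :
    NormedSpace.exp ((-(Complex.I * γ)) • Cop c) *ᵥ sVec n = phaseState c γ := by
  ext y
  rw [Cop, exp_neg_I_smul_diagonal, Matrix.mulVec_diagonal, phaseState, sVec, Complex.real_smul,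
    mul_comm]

theorem Qaoa1_mulVec_sVec (c : Bits n → ℝ) (γ β : ℝ) :
    Qaoa1 c γ β *ᵥ sVec n = NormedSpace.exp ((-(Complex.I * β)) • Bop n) *ᵥ phaseState c γ := by
  rw [Qaoa1, ← Matrix.mulVec_mulVec, exp_Cop_mulVec_sVec]

theorem hasDerivAt_P1_zero (c : Bits n → ℝ) (x : Bits n) (γ : ℝ) :
    HasDerivAt (fun β => P1 c x γ β)
      (2 * inner ℝ (phaseState c γ x) (-Complex.I * ∑ j, phaseState c γ (flipBit j x))) 0 := by
  have hentry := hasDerivAt_pi.1 (hasDerivAt_exp_neg_I_smul_mulVec (Bop n) (phaseState c γ)) x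
  simp only [P1, Qaoa1_mulVec_sVec]
  convert hentry.norm_sq using 2
  simp [Bop_mulVec]

theorem two_mul_inner_phaseState (c : Bits n → ℝ) (x : Bits n) (γ : ℝ) :
    2 * inner ℝ (phaseState c γ x) (-Complex.I * ∑ j, phaseState c γ (flipBit j x))
      = -(2 / 2 ^ n) * ∑ j : Fin n, Real.sin (γ * pd c j x) := by
  have hr : (Real.sqrt (2 ^ n))⁻¹ * (Real.sqrt (2 ^ n))⁻¹ = ((2 : ℝ) ^ n)⁻¹ := by
    rw [← mul_inv, Real.mul_self_sqrt (by positivity)]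
  simp only [phaseState, Finset.mul_sum, mul_smul_comm, inner_sum, real_inner_smul_left,
    real_inner_smul_right, inner_exp_neg_I_mul_exp, pd]
  refine Finset.sum_congr rfl fun j _ => ?_
  rw [mul_sub, ← mul_assoc _ _ (-_), hr]
  ring

theorem expC1_eq_sum_mul_P1 (c : Bits n → ℝ) (γ β : ℝ) :
    expC1 c γ β = ∑ x, c x * P1 c x γ β :=
  re_star_dotProduct_diagonal_mulVec c _

end

theorem stmt10_general (n : ℕ) (c : Bits n → ℝ) (γ : ℝ) :
    (∀ x : Bits n,
      HasDerivAt (fun β => P1 c x γ β)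
        (-(2 / 2 ^ n) * ∑ j : Fin n, Real.sin (γ * pd c j x)) 0) ∧
    HasDerivAt (fun β => expC1 c γ β)
      (-(2 / 2 ^ n) * ∑ x : Bits n, c x * ∑ j : Fin n, Real.sin (γ * pd c j x)) 0 := by
  have hP x := (hasDerivAt_P1_zero c x γ).congr_deriv (two_mul_inner_phaseState c x γ)
  refine ⟨hP, ?_⟩
  simp only [expC1_eq_sum_mul_P1]
  refine (HasDerivAt.fun_sum fun x _ => (hP x).const_mul (c x)).congr_deriv ?_
  rw [Finset.mul_sum]
  exact Finset.sum_congr rfl fun x _ => by ring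

theorem stmt10 (n : ℕ) (hn : 1 ≤ n) (c : Bits n → ℝ) (γ : ℝ) :
    (∀ x : Bits n,
      HasDerivAt (fun β => P1 c x γ β)
        (-(2 / 2 ^ n) * ∑ j : Fin n, Real.sin (γ * pd c j x)) 0) ∧
    HasDerivAt (fun β => expC1 c γ β)
      (-(2 / 2 ^ n) * ∑ x : Bits n, c x * ∑ j : Fin n, Real.sin (γ * pd c j x)) 0 :=
  stmt10_general n c γ
end
end

section
/- (Conjugated mixer.) For every cost function c : (Fin n → Bool) → ℝ and every real γ, the phase operator conjugates the transverse-field Hamiltonian as exp((iγ)•C) · B · exp(−(iγ)•C) = ∑_{j} exp(−(iγ)•(X_j·C·X_j − C)) · X_j, and this also equals ∑_{j} X_j · exp((iγ)•(X_j·C·X_j − C)). -/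
open Matrix Asymptotics

noncomputable section

/-!
Since `X_j` is an involution, conjugating by it carries `exp A` to `exp (X_j A X_j)`, so
`exp A * X_j = X_j * exp (X_j A X_j)`. For `A = iγ C` the matrix `X_j A X_j` is again diagonal,
with entries `iγ c(x^(j))`, hence commutes with `A`, and the two exponentials on either side of
`X_j` merge into one.
-/

namespace Matrix

open NormedSpace

variable {m 𝔸 : Type*} [Fintype m] [DecidableEq m]
  [NormedCommRing 𝔸] [NormedAlgebra ℚ 𝔸] [CompleteSpace 𝔸]

theorem exp_mul_of_mul_self_eq_one {X : Matrix m m 𝔸} (hX : X * X = 1) (A : Matrix m m 𝔸) :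
    exp A * X = X * exp (X * A * X) := by
  have hconj : exp (X * A * X) = X * exp A * X := exp_units_conj ⟨X, X, hX, hX⟩ A
  rw [hconj, ← mul_assoc, ← mul_assoc, hX, one_mul]

theorem mul_exp_of_mul_self_eq_one {X : Matrix m m 𝔸} (hX : X * X = 1) (A : Matrix m m 𝔸) :
    X * exp A = exp (X * A * X) * X := by
  have hXAX : X * (X * A * X) * X = A := by
    rw [← mul_assoc, ← mul_assoc, hX, one_mul, mul_assoc, hX, mul_one]
  rw [exp_mul_of_mul_self_eq_one hX, hXAX]

theorem exp_mul_mul_exp_neg_eq_mul_exp {X A : Matrix m m 𝔸} (hX : X * X = 1)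
    (hA : Commute A (X * A * X)) :
    exp A * X * exp (-A) = X * exp (X * A * X - A) := by
  rw [exp_mul_of_mul_self_eq_one hX, mul_assoc, ← exp_add_of_commute _ _ hA.symm.neg_right,
    sub_eq_add_neg]

theorem exp_mul_mul_exp_neg_eq_exp_mul {X A : Matrix m m 𝔸} (hX : X * X = 1)
    (hA : Commute A (X * A * X)) :
    exp A * X * exp (-A) = exp (-(X * A * X - A)) * X := by
  have hneg : X * -A * X = -(X * A * X) := by rw [mul_neg, neg_mul]
  rw [mul_assoc, mul_exp_of_mul_self_eq_one hX, hneg, ← mul_assoc,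
    ← exp_add_of_commute _ _ hA.neg_right, neg_sub, sub_eq_add_neg]

end Matrix

theorem Xop_mul_diagonal_mul_Xop {n : ℕ} (j : Fin n) (d : Bits n → ℂ) :
    Xop j * diagonal d * Xop j = diagonal (fun x => d (flipBit j x)) := by
  ext x y
  rw [mul_assoc, mul_apply, Finset.sum_eq_single (flipBit j x)]
  · simp [Xop, diagonal_mul, diagonal_apply, flipBit_flipBit, eq_comm]
  · intro z _ hz
    simp [Xop, hz]
  · simp

theorem Xop_mul_Xop {n : ℕ} (j : Fin n) : Xop j * Xop j = 1 := by
  simpa using Xop_mul_diagonal_mul_Xop j 1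

theorem commute_Cop_Xop_mul_Cop_mul_Xop {n : ℕ} (j : Fin n) (c : Bits n → ℝ) :
    Commute (Cop c) (Xop j * Cop c * Xop j) := by
  rw [Cop, Xop_mul_diagonal_mul_Xop]
  exact commute_diagonal _ _

theorem exp_smul_Cop_mul_Xop_mul_exp_neg_smul_Cop {n : ℕ} (j : Fin n) (c : Bits n → ℝ) (a : ℂ) :
    NormedSpace.exp (a • Cop c) * Xop j * NormedSpace.exp ((-a) • Cop c)
      = NormedSpace.exp ((-a) • (Xop j * Cop c * Xop j - Cop c)) * Xop j ∧
    NormedSpace.exp (a • Cop c) * Xop j * NormedSpace.exp ((-a) • Cop c)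
      = Xop j * NormedSpace.exp (a • (Xop j * Cop c * Xop j - Cop c)) := by
  have hconj : Xop j * (a • Cop c) * Xop j - a • Cop c = a • (Xop j * Cop c * Xop j - Cop c) := by
    rw [mul_smul_comm, smul_mul_assoc, smul_sub]
  have hcomm : Commute (a • Cop c) (Xop j * (a • Cop c) * Xop j) := by
    rw [mul_smul_comm, smul_mul_assoc]
    exact ((commute_Cop_Xop_mul_Cop_mul_Xop j c).smul_left a).smul_right a
  rw [neg_smul, neg_smul, ← hconj]
  exact ⟨exp_mul_mul_exp_neg_eq_exp_mul (Xop_mul_Xop j) hcomm,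
    exp_mul_mul_exp_neg_eq_mul_exp (Xop_mul_Xop j) hcomm⟩

theorem stmt13_general (n : ℕ) (c : Bits n → ℝ) (γ : ℝ) :
    NormedSpace.exp ((Complex.I * (γ : ℂ)) • Cop c) * Bop n *
        NormedSpace.exp ((-(Complex.I * (γ : ℂ))) • Cop c)
      = ∑ j : Fin n,
          NormedSpace.exp ((-(Complex.I * (γ : ℂ))) • (Xop j * Cop c * Xop j - Cop c))
            * Xop j ∧
    NormedSpace.exp ((Complex.I * (γ : ℂ)) • Cop c) * Bop n *
        NormedSpace.exp ((-(Complex.I * (γ : ℂ))) • Cop c)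
      = ∑ j : Fin n,
          Xop j *
            NormedSpace.exp ((Complex.I * (γ : ℂ)) • (Xop j * Cop c * Xop j - Cop c)) := by
  rw [Bop, Finset.mul_sum, Finset.sum_mul]
  exact ⟨Finset.sum_congr rfl fun j _ => (exp_smul_Cop_mul_Xop_mul_exp_neg_smul_Cop j c _).1,
    Finset.sum_congr rfl fun j _ => (exp_smul_Cop_mul_Xop_mul_exp_neg_smul_Cop j c _).2⟩

theorem stmt13 (n : ℕ) (hn : 1 ≤ n) (c : Bits n → ℝ) (γ : ℝ) :
    NormedSpace.exp ((Complex.I * (γ : ℂ)) • Cop c) * Bop n *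
        NormedSpace.exp ((-(Complex.I * (γ : ℂ))) • Cop c)
      = ∑ j : Fin n,
          NormedSpace.exp ((-(Complex.I * (γ : ℂ))) • (Xop j * Cop c * Xop j - Cop c))
            * Xop j ∧
    NormedSpace.exp ((Complex.I * (γ : ℂ)) • Cop c) * Bop n *
        NormedSpace.exp ((-(Complex.I * (γ : ℂ))) • Cop c)
      = ∑ j : Fin n,
          Xop j *
            NormedSpace.exp ((Complex.I * (γ : ℂ)) • (Xop j * Cop c * Xop j - Cop c)) :=
  stmt13_general n c γ
end
end

section
/- (Exact QAOA₁ for the Hamming-weight ramp.) Let α be a nonzero real number and let c(x) := α·|x| where |x| is the number of indices j with x j = true, with cost Hamiltonian C. Then for all real γ, β: ⟨C⟩₁(γ,β) = α·n/2 + (α·n/2)·sin(α·γ)·sin(2β). -/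
open Matrix Asymptotics

noncomputable section

/-! Both QAOA₁ layers factor over the qubits. The `Xⱼ` commute and square to `1`, so
`exp (-iβB) = ∏ⱼ (cos β - i sin β Xⱼ)`; and when the cost is a sum of one-bit terms,
`exp (-iγC)` is a product of one-qubit phases. Hence the QAOA₁ state is a product state and
`⟨C⟩₁` is a sum of single-qubit expectations. For the Hamming weight each qubit contributes
`α (1 + sin (αγ) sin 2β) / 2`. -/

theorem NormedSpace.exp_smul_of_mul_self_eq_one {𝔸 : Type*} [Ring 𝔸] [Algebra ℂ 𝔸]
    [TopologicalSpace 𝔸] [IsTopologicalRing 𝔸] [ContinuousSMul ℂ 𝔸] [T2Space 𝔸]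
    {X : 𝔸} (hX : X * X = 1) (c : ℂ) :
    NormedSpace.exp (c • X) = Complex.cosh c • 1 + Complex.sinh c • X := by
  have hX2 : ∀ k : ℕ, X ^ (2 * k) = 1 := fun k => by rw [pow_mul, sq, hX, one_pow]
  rw [NormedSpace.exp_eq_tsum ℂ]
  refine HasSum.tsum_eq (HasSum.even_add_odd ?_ ?_)
  · convert (Complex.hasSum_cosh c).smul_const (1 : 𝔸) using 2 with k
    rw [smul_pow, hX2, smul_smul, div_eq_inv_mul]
  · convert (Complex.hasSum_sinh c).smul_const X using 2 with k
    rw [smul_pow, pow_succ X, hX2, one_mul, smul_smul, div_eq_inv_mul]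

theorem Fintype.prod_apply_update {ι α M : Type*} [Fintype ι] [DecidableEq ι] [CommMonoid M]
    (F : ι → α → M) (g : ι → α) (j : ι) (a : α) :
    ∏ k, F k (Function.update g j a k) = F j a * ∏ k ∈ {j}ᶜ, F k (g k) := by
  rw [Finset.compl_eq_univ_sdiff, ← Finset.prod_update_of_mem (Finset.mem_univ j)]
  exact Finset.prod_congr rfl fun k _ => Function.apply_update F g j a k

theorem Finset.sum_sum_mul_prod_apply {ι β R : Type*} [Fintype ι] [DecidableEq ι] [Fintype β]
    [CommSemiring R] (f p : ι → β → R) :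
    ∑ x : ι → β, (∑ j, f j (x j)) * ∏ k, p k (x k)
      = ∑ j, (∑ b, f j b * p j b) * ∏ k ∈ {j}ᶜ, ∑ b, p k b := by
  simp_rw [Finset.sum_mul]
  rw [Finset.sum_comm]
  refine Finset.sum_congr rfl fun j _ => ?_
  have hfactor : ∀ x : ι → β, f j (x j) * ∏ k, p k (x k)
      = ∏ k, Function.update p j (fun b => f j b * p j b) k (x k) := fun x => by
    rw [Fintype.prod_eq_mul_prod_compl j, ← mul_assoc]
    exact (Fintype.prod_apply_update (fun k (u : β → R) => u (x k)) p j
      fun b => f j b * p j b).symm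
  rw [← Finset.sum_mul, Finset.sum_congr rfl fun x _ => hfactor x, ← Fintype.prod_sum]
  exact Fintype.prod_apply_update (fun _ (u : β → R) => ∑ b, u b) p j _

namespace Qaoa

variable {n : ℕ}

theorem flipBit_eq_update (j : Fin n) (x : Bits n) :
    flipBit j x = Function.update x j (!x j) := rfl

theorem flipBit_flipBit (j : Fin n) (x : Bits n) : flipBit j (flipBit j x) = x := by
  simp [flipBit_eq_update]

theorem flipBit_comm (j k : Fin n) (x : Bits n) :
    flipBit j (flipBit k x) = flipBit k (flipBit j x) := by
  rcases eq_or_ne j k with rfl | hjk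
  · rfl
  · simp only [flipBit_eq_update, Function.update_of_ne hjk, Function.update_of_ne hjk.symm,
      Function.update_comm hjk]

theorem Xop_mulVec (j : Fin n) (v : Bits n → ℂ) (x : Bits n) :
    (Xop j *ᵥ v) x = v (flipBit j x) := by
  simp [Xop, mulVec, dotProduct, ite_mul]

theorem Xop_mul_self (j : Fin n) : Xop j * Xop j = 1 :=
  ext_iff_mulVec.2 fun v => funext fun x => by
    simp only [← mulVec_mulVec, Xop_mulVec, flipBit_flipBit, one_mulVec]

theorem Xop_commute (j k : Fin n) : Commute (Xop j) (Xop k) :=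
  ext_iff_mulVec.2 fun v => funext fun x => by
    simp only [← mulVec_mulVec, Xop_mulVec, flipBit_comm]

def productState (g : Fin n → Bool → ℂ) : Bits n → ℂ := fun x => ∏ j, g j (x j)

theorem normSq_productState (g : Fin n → Bool → ℂ) (x : Bits n) :
    Complex.normSq (productState g x) = ∏ j, Complex.normSq (g j (x j)) :=
  map_prod Complex.normSq _ _

def mixer (c : ℂ) (u : Bool → ℂ) : Bool → ℂ :=
  fun b => Complex.cosh c * u b + Complex.sinh c * u (!b)

theorem exp_smul_Xop_mulVec_productState (j : Fin n) (c : ℂ) (g : Fin n → Bool → ℂ) :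
    NormedSpace.exp (c • Xop j) *ᵥ productState g
      = productState (Function.update g j (mixer c (g j))) := by
  rw [NormedSpace.exp_smul_of_mul_self_eq_one (Xop_mul_self j)]
  funext x
  simp only [add_mulVec, smul_mulVec, one_mulVec, Pi.add_apply, Pi.smul_apply, smul_eq_mul,
    Xop_mulVec, productState, flipBit_eq_update, Fintype.prod_apply_update g x,
    Fintype.prod_apply_update (fun k (u : Bool → ℂ) => u (x k)) g,
    Fintype.prod_eq_mul_prod_compl j, mixer]
  ring

theorem exp_smul_sum_Xop_mulVec_productState (s : Finset (Fin n)) (c : ℂ)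
    (g : Fin n → Bool → ℂ) :
    NormedSpace.exp (c • ∑ j ∈ s, Xop j) *ᵥ productState g
      = productState (s.piecewise (fun j => mixer c (g j)) g) := by
  induction s using Finset.induction with
  | empty => simp [NormedSpace.exp_zero]
  | insert j s hj ih =>
    have hcomm : Commute (c • Xop j) (c • ∑ k ∈ s, Xop k) :=
      ((Commute.sum_right s _ _ fun k _ => Xop_commute j k).smul_left c).smul_right c
    rw [Finset.sum_insert hj, smul_add, Matrix.exp_add_of_commute _ _ hcomm,
      ← mulVec_mulVec, ih, exp_smul_Xop_mulVec_productState, Finset.piecewise_insert,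
      Finset.piecewise_eq_of_notMem _ _ _ hj]

theorem exp_smul_Bop_mulVec_productState (c : ℂ) (g : Fin n → Bool → ℂ) :
    NormedSpace.exp (c • Bop n) *ᵥ productState g = productState fun j => mixer c (g j) := by
  rw [Bop, exp_smul_sum_Xop_mulVec_productState, Finset.piecewise_univ]

theorem exp_smul_Cop_mulVec_productState (z : ℂ) (f : Fin n → Bool → ℝ)
    (g : Fin n → Bool → ℂ) :
    NormedSpace.exp (z • Cop fun x => ∑ j, f j (x j)) *ᵥ productState g
      = productState fun j b => Complex.exp (z * f j b) * g j b := by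
  rw [Cop, ← diagonal_smul, Matrix.exp_diagonal]
  funext x
  simp only [mulVec_diagonal, Pi.coe_exp, Pi.smul_apply, smul_eq_mul, ← Complex.exp_eq_exp_ℂ,
    productState, Finset.prod_mul_distrib, Complex.ofReal_sum, Finset.mul_sum, Complex.exp_sum]

theorem sVec_eq_smul_productState :
    sVec n = (((√(2 ^ n))⁻¹ : ℝ) : ℂ) • productState fun _ _ => 1 := by
  funext x
  simp [sVec, productState]

def qubitAmplitude (f : Bool → ℝ) (γ β : ℝ) : Bool → ℂ :=
  mixer (-(Complex.I * β)) fun b => Complex.exp (-(Complex.I * γ) * f b)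

theorem Qaoa1_mulVec_sVec (f : Fin n → Bool → ℝ) (γ β : ℝ) :
    Qaoa1 (fun x => ∑ j, f j (x j)) γ β *ᵥ sVec n
      = (((√(2 ^ n))⁻¹ : ℝ) : ℂ) • productState fun j => qubitAmplitude (f j) γ β := by
  rw [Qaoa1, ← mulVec_mulVec, sVec_eq_smul_productState, mulVec_smul, mulVec_smul,
    exp_smul_Cop_mulVec_productState, exp_smul_Bop_mulVec_productState]
  simp only [mul_one, qubitAmplitude]

theorem mixer_neg_I_mul (β : ℝ) (u : Bool → ℂ) (b : Bool) :
    mixer (-(Complex.I * β)) u b = Real.cos β * u b - Complex.I * Real.sin β * u (!b) := by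
  have hβ : -(Complex.I * β) = ((-β : ℝ) : ℂ) * Complex.I := by push_cast; ring
  rw [mixer, hβ, Complex.cosh_mul_I, Complex.sinh_mul_I, ← Complex.ofReal_cos,
    ← Complex.ofReal_sin, Real.cos_neg, Real.sin_neg]
  push_cast
  ring

theorem sum_normSq_mixer (β : ℝ) (u : Bool → ℂ) :
    ∑ b, Complex.normSq (mixer (-(Complex.I * β)) u b) = ∑ b, Complex.normSq (u b) := by
  simp only [Fintype.sum_bool, mixer_neg_I_mul, Complex.normSq_apply, Bool.not_true,
    Bool.not_false, Complex.sub_re, Complex.sub_im, Complex.mul_re, Complex.mul_im,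
    Complex.ofReal_re, Complex.ofReal_im, Complex.I_re, Complex.I_im]
  linear_combination ((u true).re ^ 2 + (u true).im ^ 2 + (u false).re ^ 2 + (u false).im ^ 2)
    * Real.cos_sq_add_sin_sq β

theorem sum_normSq_qubitAmplitude (f : Bool → ℝ) (γ β : ℝ) :
    ∑ b, Complex.normSq (qubitAmplitude f γ β b) = 2 := by
  have hunit : ∀ b, Complex.normSq (Complex.exp (-(Complex.I * γ) * f b)) = 1 := fun b => by
    simp [Complex.normSq_eq_norm_sq, Complex.norm_exp]
  rw [qubitAmplitude, sum_normSq_mixer, Fintype.sum_bool, hunit, hunit]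
  norm_num

theorem normSq_qubitAmplitude_true (f : Bool → ℝ) (γ β : ℝ) :
    Complex.normSq (qubitAmplitude f γ β true)
      = 1 + Real.sin (γ * (f true - f false)) * Real.sin (2 * β) := by
  have hphase : ∀ b, -(Complex.I * γ) * f b = ((-(γ * f b) : ℝ) : ℂ) * Complex.I := fun b => by
    push_cast
    ring
  simp only [qubitAmplitude, mixer_neg_I_mul, Bool.not_true, hphase, Complex.exp_mul_I,
    ← Complex.ofReal_cos, ← Complex.ofReal_sin, Real.cos_neg, Real.sin_neg,
    Complex.normSq_apply, Complex.sub_re, Complex.sub_im, Complex.add_re, Complex.add_im,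
    Complex.mul_re, Complex.mul_im, Complex.ofReal_re, Complex.ofReal_im, Complex.I_re,
    Complex.I_im]
  rw [mul_sub γ, Real.sin_sub]
  linear_combination Real.cos β ^ 2 * Real.cos_sq_add_sin_sq (γ * f true)
    + Real.sin β ^ 2 * Real.cos_sq_add_sin_sq (γ * f false) + Real.cos_sq_add_sin_sq β
    - (Real.sin (γ * f true) * Real.cos (γ * f false)
      - Real.cos (γ * f true) * Real.sin (γ * f false)) * Real.sin_two_mul β

theorem re_star_dotProduct_Cop_mulVec (c : Bits n → ℝ) (v : Bits n → ℂ) :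
    (star v ⬝ᵥ (Cop c *ᵥ v)).re = ∑ x, c x * Complex.normSq (v x) := by
  simp only [dotProduct, Cop, mulVec_diagonal, Complex.re_sum, Pi.star_apply]
  refine Finset.sum_congr rfl fun x _ => ?_
  rw [RCLike.star_def, mul_left_comm, ← Complex.normSq_eq_conj_mul_self, ← Complex.ofReal_mul,
    Complex.ofReal_re]

theorem expC1_separable (f : Fin n → Bool → ℝ) (γ β : ℝ) :
    expC1 (fun x => ∑ j, f j (x j)) γ β
      = ∑ j, (∑ b, f j b * Complex.normSq (qubitAmplitude (f j) γ β b)) / 2 := by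
  have hnorm : (√(2 ^ n))⁻¹ * (√(2 ^ n))⁻¹ = ((2 : ℝ) ^ n)⁻¹ := by
    rw [← mul_inv, Real.mul_self_sqrt (by positivity)]
  rw [expC1, Qaoa1_mulVec_sVec, re_star_dotProduct_Cop_mulVec]
  simp only [Pi.smul_apply, smul_eq_mul, Complex.normSq_mul, Complex.normSq_ofReal,
    normSq_productState, hnorm, mul_left_comm _ ((2 : ℝ) ^ n)⁻¹]
  rw [← Finset.mul_sum,
    Finset.sum_sum_mul_prod_apply f fun k b => Complex.normSq (qubitAmplitude (f k) γ β b),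
    Finset.mul_sum]
  refine Finset.sum_congr rfl fun j _ => ?_
  have hn : (2 : ℝ) ^ n = 2 * 2 ^ (n - 1) := by
    rw [← pow_succ']
    congr
    have := j.pos
    omega
  simp only [sum_normSq_qubitAmplitude, Finset.prod_const, Finset.card_compl,
    Finset.card_singleton, Fintype.card_fin, hn]
  field_simp

end Qaoa

theorem stmt17_general (n : ℕ) (α : ℝ) (γ β : ℝ) :
    expC1 (fun x : Bits n =>
        α * ((Finset.univ.filter fun j : Fin n => x j = true).card : ℝ)) γ β
      = α * n / 2 + α * n / 2 * Real.sin (α * γ) * Real.sin (2 * β) := by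
  have hcost : (fun x : Bits n =>
        α * ((Finset.univ.filter fun j : Fin n => x j = true).card : ℝ))
      = fun x => ∑ j, if x j then α else 0 := by
    funext x
    simp only [Finset.card_filter, Nat.cast_sum, Nat.cast_ite, Nat.cast_one, Nat.cast_zero,
      Finset.mul_sum, mul_ite, mul_one, mul_zero]
  rw [hcost, Qaoa.expC1_separable fun _ b => if b then α else 0]
  simp only [Fintype.sum_bool, if_true, Bool.false_eq_true, if_false, zero_mul, add_zero,
    Qaoa.normSq_qubitAmplitude_true, sub_zero, mul_comm γ α, Finset.sum_const, Finset.card_univ,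
    Fintype.card_fin, nsmul_eq_mul]
  ring

theorem stmt17 (n : ℕ) (hn : 1 ≤ n) (α : ℝ) (hα : α ≠ 0) (γ β : ℝ) :
    expC1 (fun x : Bits n =>
        α * ((Finset.univ.filter fun j : Fin n => x j = true).card : ℝ)) γ β
      = α * n / 2 + α * n / 2 * Real.sin (α * γ) * Real.sin (2 * β) :=
  stmt17_general n α γ β
end
end

section
/- (Second-order effect of one QAOA level on an arbitrary state.) For every cost function c : (Fin n → Bool) → ℝ and every unit vector ψ : (Fin n → Bool) → ℂ, define g(γ,β) := Re(star(Q(γ,β) *ᵥ ψ) ⬝ᵥ (C *ᵥ (Q(γ,β) *ᵥ ψ))) where Q(γ,β) := exp(−(iβ)•B)·exp(−(iγ)•C). Then the function (γ,β) ↦ g(γ,β) − Re⟨C⟩_ψ − β·Re⟨i•∇C⟩_ψ + (β²/2)·Re⟨∇²C⟩_ψ + γβ·Re⟨∇_C∇C⟩_ψ is O((|γ|+|β|)³) as (γ,β) → (0,0), where ⟨A⟩_ψ := star ψ ⬝ᵥ (A *ᵥ ψ). -/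
open Matrix Asymptotics

noncomputable section

/-!
With `Ad_z^A M := exp (z • A) * M * exp (-z • A)`, the QAOA₁ expectation is
`⟨ψ, Ad^C_{iγ} (Ad^B_{iβ} C) ψ⟩`. Since `Ad_z^A = exp (z • ad A)` as an operator on the algebra,
each conjugation has the Taylor expansion `∑ₖ zᵏ/k! (ad A)ᵏ M + O(|z|ᵐ)`. Expanding the inner
conjugation to second order in `β`, and the outer one to first order on the `β`-term and to zeroth
order on the `β²`-term (it fixes `C`, which commutes with `C`), leaves a remainder of order
`(|γ| + |β|)³`; taking an expectation is a bounded linear functional.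
-/

open NormedSpace Filter Topology
open scoped Nat

section ConjugationExpansion

variable {𝕜 𝔸 : Type*} [RCLike 𝕜] [NormedRing 𝔸] [NormedAlgebra 𝕜 𝔸]

theorem exp_smul_sub_sum_isBigO [CompleteSpace 𝔸] (X : 𝔸) (m : ℕ) :
    (fun z : 𝕜 => exp (z • X) - ∑ k ∈ Finset.range m, (z ^ k / k !) • X ^ k)
      =O[𝓝 0] fun z => ‖z‖ ^ m := by
  have hX : Tendsto (fun z : 𝕜 => z • X) (𝓝 0) (𝓝 0) :=
    (continuous_id.smul continuous_const).tendsto' 0 0 (zero_smul 𝕜 X)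
  have h := ((hasFPowerSeriesAt_exp_zero_of_radius_pos
    (expSeries_radius_pos 𝕜 𝔸)).isBigO_sub_partialSum_pow m).comp_tendsto hX
  refine (h.congr_left fun z => ?_).trans (isBigO_of_le' (c := ‖X‖ ^ m) _ fun z => ?_)
  · simp [FormalMultilinearSeries.partialSum, expSeries_apply_eq, smul_pow, smul_smul,
      div_eq_inv_mul]
  · simp [norm_smul, mul_pow, mul_comm]

variable (𝕜 𝔸) in
def adCLM : 𝔸 →L[𝕜] 𝔸 →L[𝕜] 𝔸 :=
  ContinuousLinearMap.mul 𝕜 𝔸 - (ContinuousLinearMap.mul 𝕜 𝔸).flip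

@[simp]
theorem adCLM_apply (A M : 𝔸) : adCLM 𝕜 𝔸 A M = ⁅A, M⁆ := by
  simp [adCLM, Ring.lie_def]

variable (𝕜) in
def mulLeftRingHom : 𝔸 →+* (𝔸 →L[𝕜] 𝔸) where
  toFun := ContinuousLinearMap.mul 𝕜 𝔸
  map_one' := by ext; simp
  map_mul' a b := by ext; simp [mul_assoc]
  map_zero' := by simp
  map_add' := by simp

variable (𝕜) in
def mulRightRingHom : 𝔸ᵐᵒᵖ →+* (𝔸 →L[𝕜] 𝔸) where
  toFun a := (ContinuousLinearMap.mul 𝕜 𝔸).flip a.unop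
  map_one' := by ext; simp
  map_mul' a b := by ext; simp [mul_assoc]
  map_zero' := by simp
  map_add' := by simp

/-- `ad A` is the difference of the commuting operators of left and right multiplication by `A`,
so its exponential factors into left multiplication by `exp A` and right multiplication by
`exp (-A)`. -/
theorem exp_mul_mul_exp_neg [CompleteSpace 𝔸] (A M : 𝔸) :
    exp A * M * exp (-A) = exp (adCLM 𝕜 𝔸 A) M := by
  let _ : NormedAlgebra ℚ 𝔸 := .restrictScalars ℚ 𝕜 𝔸
  let _ : NormedAlgebra ℚ 𝔸ᵐᵒᵖ := .restrictScalars ℚ 𝕜 𝔸ᵐᵒᵖ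
  let _ : NormedAlgebra ℚ (𝔸 →L[𝕜] 𝔸) := .restrictScalars ℚ 𝕜 (𝔸 →L[𝕜] 𝔸)
  have hcomm : Commute (mulLeftRingHom 𝕜 A) (mulRightRingHom 𝕜 (MulOpposite.op A)) :=
    ContinuousLinearMap.ext fun M => (mul_assoc A M A).symm
  have hL := map_exp (mulLeftRingHom 𝕜 (𝔸 := 𝔸)) (ContinuousLinearMap.mul 𝕜 𝔸).continuous A
  have hR := map_exp (mulRightRingHom 𝕜 (𝔸 := 𝔸))
    ((ContinuousLinearMap.mul 𝕜 𝔸).flip.continuous.comp MulOpposite.continuous_unop)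
    (MulOpposite.op (-A))
  rw [exp_op] at hR
  have had : adCLM 𝕜 𝔸 A = mulLeftRingHom 𝕜 A + -mulRightRingHom 𝕜 (MulOpposite.op A) := by
    ext; simp [mulLeftRingHom, mulRightRingHom, Ring.lie_def, sub_eq_add_neg]
  rw [had, exp_add_of_commute hcomm.neg_right, ← hL, ← map_neg, ← MulOpposite.op_neg, ← hR]
  simp [mulLeftRingHom, mulRightRingHom, mul_assoc]

theorem exp_smul_conj_sub_sum_isBigO [CompleteSpace 𝔸] (A M : 𝔸) (m : ℕ) :
    (fun z : 𝕜 => exp (z • A) * M * exp ((-z) • A)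
        - ∑ k ∈ Finset.range m, (z ^ k / k !) • (adCLM 𝕜 𝔸 A ^ k) M)
      =O[𝓝 0] fun z => ‖z‖ ^ m := by
  refine (((ContinuousLinearMap.apply 𝕜 𝔸 M).isBigO_comp _ _).trans
    (exp_smul_sub_sum_isBigO (adCLM 𝕜 𝔸 A) m)).congr_left fun z => ?_
  simp [neg_smul, exp_mul_mul_exp_neg (𝕜 := 𝕜)]

theorem exp_smul_mul_mul_exp_neg_smul_of_commute [CompleteSpace 𝔸] {A M : 𝔸}
    (hAM : Commute A M) (u : 𝕜) : exp (u • A) * M * exp ((-u) • A) = M := by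
  let _ : NormedAlgebra ℚ 𝔸 := .restrictScalars ℚ 𝕜 𝔸
  rw [((hAM.smul_left u).exp_left).eq, mul_assoc, ← exp_add_of_commute
    (((Commute.refl A).smul_left u).smul_right (-u)), ← add_smul, add_neg_cancel, zero_smul,
    exp_zero, mul_one]

theorem conj_sub_second_order_eq (W X W' M D₁ D₂ K : 𝔸) (u v : 𝕜) (hM : W * M * W' = M) :
    W * X * W' - (M + v • D₁ + (v ^ 2 / 2) • D₂ + (v * u) • K)
      = W * (X - (M + v • D₁ + (v ^ 2 / 2) • D₂)) * W'
        + v • (W * D₁ * W' - (D₁ + u • K)) + (v ^ 2 / 2) • (W * D₂ * W' - D₂) := by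
  simp only [mul_sub, sub_mul, mul_add, add_mul, mul_smul_comm, smul_mul_assoc, smul_sub,
    smul_add, smul_smul, hM]
  abel

omit [NormedRing 𝔸] [NormedAlgebra 𝕜 𝔸] in
theorem norm_fst_pow_mul_norm_snd_pow_le (i j : ℕ) (p : 𝕜 × 𝕜) :
    ‖p.1‖ ^ i * ‖p.2‖ ^ j ≤ ‖(‖p.1‖ + ‖p.2‖) ^ (i + j)‖ := by
  rw [Real.norm_of_nonneg (by positivity), pow_add]
  gcongr <;> simp

theorem exp_smul_conj_exp_smul_conj_isBigO [CompleteSpace 𝔸] {A M : 𝔸} (hAM : Commute A M)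
    (B : 𝔸) :
    (fun p : 𝕜 × 𝕜 =>
      exp (p.1 • A) * (exp (p.2 • B) * M * exp ((-p.2) • B)) * exp ((-p.1) • A)
        - (M + p.2 • ⁅B, M⁆ + (p.2 ^ 2 / 2) • ⁅B, ⁅B, M⁆⁆ + (p.2 * p.1) • ⁅A, ⁅B, M⁆⁆))
      =O[𝓝 0] fun p => (‖p.1‖ + ‖p.2‖) ^ 3 := by
  let _ : NormedAlgebra ℚ 𝔸 := .restrictScalars ℚ 𝕜 𝔸
  have hfst : Tendsto (fun p : 𝕜 × 𝕜 => p.1) (𝓝 0) (𝓝 0) := continuous_fst.tendsto 0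
  have hsnd : Tendsto (fun p : 𝕜 × 𝕜 => p.2) (𝓝 0) (𝓝 0) := continuous_snd.tendsto 0
  have hB : (fun p : 𝕜 × 𝕜 => exp (p.2 • B) * M * exp ((-p.2) • B)
      - (M + p.2 • ⁅B, M⁆ + (p.2 ^ 2 / 2) • ⁅B, ⁅B, M⁆⁆)) =O[𝓝 0] fun p => ‖p.2‖ ^ 3 := by
    simpa [Function.comp_def, Finset.sum_range_succ, pow_two, add_assoc] using
      (exp_smul_conj_sub_sum_isBigO (𝕜 := 𝕜) B M 3).comp_tendsto hsnd
  have hA₁ : (fun p : 𝕜 × 𝕜 => exp (p.1 • A) * ⁅B, M⁆ * exp ((-p.1) • A)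
      - (⁅B, M⁆ + p.1 • ⁅A, ⁅B, M⁆⁆)) =O[𝓝 0] fun p => ‖p.1‖ ^ 2 := by
    simpa [Function.comp_def, Finset.sum_range_succ] using
      (exp_smul_conj_sub_sum_isBigO (𝕜 := 𝕜) A ⁅B, M⁆ 2).comp_tendsto hfst
  have hA₀ : (fun p : 𝕜 × 𝕜 => exp (p.1 • A) * ⁅B, ⁅B, M⁆⁆ * exp ((-p.1) • A)
      - ⁅B, ⁅B, M⁆⁆) =O[𝓝 0] fun p => ‖p.1‖ := by
    simpa [Function.comp_def, Finset.sum_range_succ] using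
      (exp_smul_conj_sub_sum_isBigO (𝕜 := 𝕜) A ⁅B, ⁅B, M⁆⁆ 1).comp_tendsto hfst
  have hW : (fun p : 𝕜 × 𝕜 => exp (p.1 • A)) =O[𝓝 0] fun _ => (1 : ℝ) :=
    ((exp_continuous.comp (continuous_fst.smul continuous_const)).tendsto 0).isBigO_one ℝ
  have hW' : (fun p : 𝕜 × 𝕜 => exp ((-p.1) • A)) =O[𝓝 0] fun _ => (1 : ℝ) :=
    ((exp_continuous.comp (continuous_fst.neg.smul continuous_const)).tendsto 0).isBigO_one ℝ
  have hv : (fun p : 𝕜 × 𝕜 => p.2) =O[𝓝 0] fun p => ‖p.2‖ :=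
    isBigO_norm_right.2 (isBigO_refl _ _)
  have hv2 : (fun p : 𝕜 × 𝕜 => p.2 ^ 2 / 2) =O[𝓝 0] fun p => ‖p.2‖ ^ 2 :=
    isBigO_of_le' (c := 1) _ fun p => by
      simpa [div_le_iff₀] using le_mul_of_one_le_right (sq_nonneg ‖p.2‖) one_le_two
  refine IsBigO.congr_left ?_ fun p => (conj_sub_second_order_eq _ _ _ _ _ _ _ p.1 p.2
    (exp_smul_mul_mul_exp_neg_smul_of_commute hAM p.1)).symm
  refine ((((hW.mul hB).mul hW').trans_le fun p => ?_).add
    ((hv.smul hA₁).trans_le fun p => ?_)).add ((hv2.smul hA₀).trans_le fun p => ?_)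
  · simpa using norm_fst_pow_mul_norm_snd_pow_le 0 3 p
  · simpa [mul_comm] using norm_fst_pow_mul_norm_snd_pow_le 2 1 p
  · simpa [mul_comm] using norm_fst_pow_mul_norm_snd_pow_le 1 2 p

end ConjugationExpansion

theorem star_mulVec_dotProduct_mulVec_mulVec {m : Type*} [Fintype m] (Q M : Matrix m m ℂ)
    (ψ : m → ℂ) : star (Q *ᵥ ψ) ⬝ᵥ (M *ᵥ (Q *ᵥ ψ)) = star ψ ⬝ᵥ ((Qᴴ * M * Q) *ᵥ ψ) := by
  rw [star_mulVec, ← dotProduct_mulVec, mulVec_mulVec, mulVec_mulVec, Matrix.mul_assoc]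

attribute [local instance] Matrix.linftyOpNormedRing Matrix.linftyOpNormedAlgebra

theorem isBigO_re_dotProduct_mulVec {α m : Type*} [Fintype m] [DecidableEq m] {l : Filter α}
    (f : α → Matrix m m ℂ) (ψ : m → ℂ) : (fun x => (star ψ ⬝ᵥ (f x *ᵥ ψ)).re) =O[l] f :=
  let ev : Matrix m m ℂ →ₗ[ℂ] ℂ :=
    { toFun M := star ψ ⬝ᵥ (M *ᵥ ψ)
      map_add' _ _ := by simp [add_mulVec, dotProduct_add]
      map_smul' _ _ := by simp [smul_mulVec, dotProduct_smul] }
  (Complex.reCLM.isBigO_comp _ _).trans (ev.toContinuousLinearMap.isBigO_comp f l)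

section QAOA

variable {n : ℕ}

theorem flipBit_involutive (j : Fin n) : Function.Involutive (flipBit j) := fun x => by
  simp [flipBit]

theorem Xop_conjTranspose (j : Fin n) : (Xop j)ᴴ = Xop j := by
  ext x y
  simp only [conjTranspose_apply, Xop, (flipBit_involutive j).eq_iff, eq_comm (a := x)]
  split_ifs <;> simp

theorem isHermitian_Bop : (Bop n).IsHermitian := by
  simp [IsHermitian, Bop, conjTranspose_sum, Xop_conjTranspose]

theorem isHermitian_Cop (c : Bits n → ℝ) : (Cop c).IsHermitian := by
  simp [IsHermitian, Cop]

theorem Qaoa1_conjTranspose (c : Bits n → ℝ) (γ β : ℝ) :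
    (Qaoa1 c γ β)ᴴ = exp ((Complex.I * γ) • Cop c) * exp ((Complex.I * β) • Bop n) := by
  simp [Qaoa1, ← Matrix.exp_conjTranspose, isHermitian_Bop.eq, (isHermitian_Cop c).eq]

theorem star_Qaoa1_mulVec_dotProduct (c : Bits n → ℝ) (γ β : ℝ) (ψ : Bits n → ℂ) :
    star (Qaoa1 c γ β *ᵥ ψ) ⬝ᵥ (Cop c *ᵥ (Qaoa1 c γ β *ᵥ ψ))
      = star ψ ⬝ᵥ ((exp ((Complex.I * γ) • Cop c)
          * (exp ((Complex.I * β) • Bop n) * Cop c * exp ((-(Complex.I * β)) • Bop n))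
          * exp ((-(Complex.I * γ)) • Cop c)) *ᵥ ψ) := by
  rw [star_mulVec_dotProduct_mulVec_mulVec, Qaoa1_conjTranspose, Qaoa1]
  simp only [Matrix.mul_assoc]

theorem gradB_eq_lie (A : Matrix (Bits n) (Bits n) ℂ) : gradB A = ⁅Bop n, A⁆ :=
  (Ring.lie_def _ _).symm

theorem gradC_eq_lie (c : Bits n → ℝ) (A : Matrix (Bits n) (Bits n) ℂ) :
    gradC c A = ⁅Cop c, A⁆ :=
  (Ring.lie_def _ _).symm

/-- Stated with the plain matrix operations: those of the `ℓ∞`-operator normed ring are only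
defeq to them, which `ring` and `simp` do not see through. -/
theorem exp_smul_Cop_conj_exp_smul_Bop_conj_isBigO (c : Bits n → ℝ) :
    (fun p : ℂ × ℂ =>
      exp (p.1 • Cop c) * (exp (p.2 • Bop n) * Cop c * exp ((-p.2) • Bop n)) * exp ((-p.1) • Cop c)
        - (Cop c + p.2 • gradB (Cop c) + (p.2 ^ 2 / 2) • gradB (gradB (Cop c))
          + (p.2 * p.1) • gradC c (gradB (Cop c))))
      =O[𝓝 0] fun p => (‖p.1‖ + ‖p.2‖) ^ 3 := by
  rw [gradC_eq_lie, gradB_eq_lie, gradB_eq_lie]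
  exact exp_smul_conj_exp_smul_conj_isBigO (Commute.refl (Cop c)) (Bop n)

end QAOA

theorem stmt18_general (n : ℕ) (c : Bits n → ℝ) (ψ : Bits n → ℂ) :
    (fun p : ℝ × ℝ =>
        (star (Qaoa1 c p.1 p.2 *ᵥ ψ) ⬝ᵥ (Cop c *ᵥ (Qaoa1 c p.1 p.2 *ᵥ ψ))).re
          - (star ψ ⬝ᵥ (Cop c *ᵥ ψ)).re
          - p.2 * (star ψ ⬝ᵥ ((Complex.I • gradB (Cop c)) *ᵥ ψ)).re
          + p.2 ^ 2 / 2 * (star ψ ⬝ᵥ (gradB (gradB (Cop c)) *ᵥ ψ)).re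
          + p.1 * p.2 * (star ψ ⬝ᵥ (gradC c (gradB (Cop c)) *ᵥ ψ)).re)
      =O[nhds ((0 : ℝ), (0 : ℝ))] fun p : ℝ × ℝ => (|p.1| + |p.2|) ^ 3 := by
  have hI := (by fun_prop : Continuous fun p : ℝ × ℝ => (Complex.I * p.1, Complex.I * p.2)).tendsto'
    0 0 (by simp)
  refine ((isBigO_re_dotProduct_mulVec _ ψ).trans
    ((exp_smul_Cop_conj_exp_smul_Bop_conj_isBigO c).comp_tendsto hI)).congr
    (fun p => ?_) (fun p => by simp)
  simp only [Function.comp_apply, star_Qaoa1_mulVec_dotProduct]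
  simp only [sub_mulVec, add_mulVec, smul_mulVec, dotProduct_sub, dotProduct_add, dotProduct_smul,
    smul_eq_mul, Complex.sub_re, Complex.add_re, Complex.mul_re, Complex.mul_im, Complex.I_re,
    Complex.I_im, Complex.ofReal_re, Complex.ofReal_im, Complex.div_ofNat_re, Complex.div_ofNat_im,
    sq]
  ring

theorem stmt18 (n : ℕ) (hn : 1 ≤ n) (c : Bits n → ℝ) (ψ : Bits n → ℂ)
    (hψ : ∑ x : Bits n, ‖ψ x‖ ^ 2 = 1) :
    (fun p : ℝ × ℝ =>
        (star (Qaoa1 c p.1 p.2 *ᵥ ψ) ⬝ᵥ (Cop c *ᵥ (Qaoa1 c p.1 p.2 *ᵥ ψ))).re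
          - (star ψ ⬝ᵥ (Cop c *ᵥ ψ)).re
          - p.2 * (star ψ ⬝ᵥ ((Complex.I • gradB (Cop c)) *ᵥ ψ)).re
          + p.2 ^ 2 / 2 * (star ψ ⬝ᵥ (gradB (gradB (Cop c)) *ᵥ ψ)).re
          + p.1 * p.2 * (star ψ ⬝ᵥ (gradC c (gradB (Cop c)) *ᵥ ψ)).re)
      =O[nhds ((0 : ℝ), (0 : ℝ))] fun p : ℝ × ℝ => (|p.1| + |p.2|) ^ 3 :=
  stmt18_general n c ψ
end
end

section
/- (QAOA beats random guessing.) For every cost function c : (Fin n → Bool) → ℝ that is not constant, there exist real γ, β such that ⟨C⟩₁(γ,β) > (1/2^n)·∑_x c(x), and there exist real γ', β' such that ⟨C⟩₁(γ',β') < (1/2^n)·∑_x c(x). -/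
open Matrix Asymptotics

noncomputable section

/-!
The phase-separated state `e^{-iγC}|s⟩` still measures every bitstring with probability `2^{-n}`,
so `⟨C⟩₁(γ, 0)` is the average of `c`. Differentiating in `β` at `0` gives
`-2^{1-n} ∑ₓ ∑ⱼ c(x) sin(γ ∂ⱼc(x))`; as a function of `γ` this sum has derivative
`-½ ∑ₓ ∑ⱼ (∂ⱼc(x))² < 0` at `γ = 0`, so it is nonzero for some `γ`. For that `γ`, `β ↦ ⟨C⟩₁(γ, β)`
has nonzero derivative at `0`, hence no local extremum there, and takes values on both sides of
the average.
-/

theorem exists_lt_and_gt_of_hasDerivAt {f : ℝ → ℝ} {f' a : ℝ} (hf : HasDerivAt f f' a)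
    (hf' : f' ≠ 0) : (∃ t, f t < f a) ∧ ∃ t, f a < f t := by
  constructor
  · by_contra! h
    exact hf' (IsLocalMin.hasDerivAt_eq_zero (Filter.Eventually.of_forall h) hf)
  · by_contra! h
    exact hf' (IsLocalMax.hasDerivAt_eq_zero (Filter.Eventually.of_forall h) hf)

theorem Complex.re_neg_I_mul_exp_mul_conj_exp (a b r : ℝ) :
    (-I * (exp (a * I) * r) * (starRingEnd ℂ) (exp (b * I) * r)).re =
      r ^ 2 * Real.sin (a - b) := by
  have h : -I * (exp (a * I) * r) * (exp (b * -I) * r) =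
      ((r ^ 2 : ℝ) : ℂ) * (-I * exp (↑(a - b) * I)) := by
    rw [ofReal_sub, sub_mul, exp_sub, mul_neg, exp_neg]
    push_cast
    ring
  rw [map_mul, ← exp_conj, map_mul, conj_ofReal, conj_ofReal, conj_I, h, re_ofReal_mul, neg_mul,
    neg_re, I_mul_re, neg_neg, exp_ofReal_mul_I_im]

section MatrixExp

-- Any Banach-algebra norm on matrices will do: the lemma below only sees the product topology.
attribute [local instance] Matrix.linftyOpNormedAddCommGroup Matrix.linftyOpNormedRing
  Matrix.linftyOpNormedAlgebra

theorem Matrix.hasDerivAt_exp_smul_mulVec_apply {ι : Type*} [Fintype ι] [DecidableEq ι]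
    (A : Matrix ι ι ℂ) (v : ι → ℂ) (x : ι) (t : ℝ) :
    HasDerivAt (fun t : ℝ => (NormedSpace.exp (t • A) *ᵥ v) x)
      (((A * NormedSpace.exp (t • A)) *ᵥ v) x) t :=
  let L := (LinearMap.proj x).comp ((mulVecBilin ℝ ℝ).flip v)
  L.toContinuousLinearMap.hasFDerivAt.comp_hasDerivAt t (hasDerivAt_exp_smul_const' A t)

end MatrixExp

namespace QAOA

variable {n : ℕ}

theorem flipBit_involutive (j : Fin n) : Function.Involutive (flipBit j) := by
  intro x
  simp [flipBit]

theorem apply_eq_of_forall_flipBit {α : Type*} {f : Bits n → α}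
    (hf : ∀ j x, f (flipBit j x) = f x) (x y : Bits n) : f x = f y := by
  suffices ∀ s : Finset (Fin n), f (s.piecewise x y) = f y by
    simpa using this Finset.univ
  intro s
  induction s using Finset.induction_on with
  | empty => simp
  | @insert j s _ ih =>
    rw [Finset.piecewise_insert, ← ih]
    by_cases h : x j = s.piecewise x y j
    · rw [h, Function.update_eq_self]
    · rw [Bool.eq_not_iff.2 h]
      exact hf j _

theorem exists_pd_ne_zero {c : Bits n → ℝ} (hc : ∃ x y : Bits n, c x ≠ c y) :
    ∃ j x, pd c j x ≠ 0 := by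
  by_contra! h
  obtain ⟨x, y, hxy⟩ := hc
  exact hxy (apply_eq_of_forall_flipBit (fun j x => sub_eq_zero.1 (h j x)) x y)

theorem sum_pd_sq_pos {c : Bits n → ℝ} (hc : ∃ x y : Bits n, c x ≠ c y) :
    0 < ∑ x, ∑ j, pd c j x ^ 2 := by
  obtain ⟨j, x, hjx⟩ := exists_pd_ne_zero hc
  exact Finset.sum_pos' (fun _ _ => Finset.sum_nonneg fun _ _ => sq_nonneg _)
    ⟨x, Finset.mem_univ x, Finset.sum_pos' (fun _ _ => sq_nonneg _)
      ⟨j, Finset.mem_univ j, by positivity⟩⟩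

theorem sum_mul_pd (c : Bits n → ℝ) (j : Fin n) :
    ∑ x, c x * pd c j x = -(1 / 2) * ∑ x, pd c j x ^ 2 := by
  have hflip : ∑ x, c x * pd c j x = ∑ x, c (flipBit j x) * -pd c j x := by
    rw [← (flipBit_involutive j).bijective.sum_comp]
    simp [pd, flipBit_involutive j _]
  have h : 2 * ∑ x, c x * pd c j x = -∑ x, pd c j x ^ 2 := by
    rw [two_mul]
    nth_rw 2 [hflip]
    rw [← Finset.sum_add_distrib, ← Finset.sum_neg_distrib]
    exact Finset.sum_congr rfl fun x _ => by rw [pd]; ring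
  linarith

theorem hasDerivAt_sum_mul_sin_pd (c : Bits n → ℝ) :
    HasDerivAt (fun γ => ∑ x, ∑ j, c x * Real.sin (γ * pd c j x))
      (-(1 / 2) * ∑ x, ∑ j, pd c j x ^ 2) 0 := by
  have h : ∀ x j, HasDerivAt (fun γ => c x * Real.sin (γ * pd c j x)) (c x * pd c j x) 0 := by
    intro x j
    simpa using ((hasDerivAt_mul_const (pd c j x)).sin.const_mul (c x) : HasDerivAt _ _ (0 : ℝ))
  refine (HasDerivAt.fun_sum fun x _ => HasDerivAt.fun_sum fun j _ => h x j).congr_deriv ?_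
  rw [Finset.sum_comm, Finset.sum_comm (f := fun x j => pd c j x ^ 2), Finset.mul_sum]
  exact Finset.sum_congr rfl fun j _ => sum_mul_pd c j

theorem inv_sqrt_two_pow_sq : ((√(2 ^ n))⁻¹ : ℝ) ^ 2 = 1 / 2 ^ n := by
  rw [inv_pow, Real.sq_sqrt (by positivity), one_div]

theorem exp_smul_Cop_mulVec (c : Bits n → ℝ) (z : ℂ) (v : Bits n → ℂ) (x : Bits n) :
    (NormedSpace.exp (z • Cop c) *ᵥ v) x = Complex.exp (z * c x) * v x := by
  rw [Cop, ← Matrix.diagonal_smul, Matrix.exp_diagonal, Matrix.mulVec_diagonal, Pi.coe_exp,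
    Complex.exp_eq_exp_ℂ]
  rfl

theorem Bop_mulVec (v : Bits n → ℂ) (x : Bits n) :
    (Bop n *ᵥ v) x = ∑ j, v (flipBit j x) := by
  simp only [Bop, Matrix.sum_mulVec, Finset.sum_apply]
  refine Finset.sum_congr rfl fun j _ => ?_
  simp [Xop, Matrix.mulVec, dotProduct]

def phaseState (c : Bits n → ℝ) (γ : ℝ) : Bits n → ℂ :=
  NormedSpace.exp ((-(Complex.I * γ)) • Cop c) *ᵥ sVec n

theorem phaseState_apply (c : Bits n → ℝ) (γ : ℝ) (x : Bits n) :
    phaseState c γ x = Complex.exp (↑(-(γ * c x)) * Complex.I) * sVec n x := by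
  rw [phaseState, exp_smul_Cop_mulVec]
  push_cast
  ring_nf

theorem Qaoa1_mulVec_sVec (c : Bits n → ℝ) (γ β : ℝ) :
    Qaoa1 c γ β *ᵥ sVec n =
      NormedSpace.exp (β • (-Complex.I) • Bop n) *ᵥ phaseState c γ := by
  rw [Qaoa1, ← Matrix.mulVec_mulVec, ← smul_assoc, phaseState]
  congr 4
  simp [mul_comm]

theorem expC1_eq_sum_P1 (c : Bits n → ℝ) (γ β : ℝ) :
    expC1 c γ β = ∑ x, c x * P1 c x γ β := by
  simp only [expC1, P1, dotProduct, Cop, Matrix.mulVec_diagonal, Complex.re_sum]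
  refine Finset.sum_congr rfl fun x _ => ?_
  rw [Pi.star_apply, mul_left_comm, Complex.star_def, Complex.conj_mul']
  norm_cast

theorem expC1_zero_right (c : Bits n → ℝ) (γ : ℝ) :
    expC1 c γ 0 = 1 / 2 ^ n * ∑ x, c x := by
  rw [expC1_eq_sum_P1, Finset.mul_sum]
  refine Finset.sum_congr rfl fun x _ => ?_
  rw [P1, Qaoa1_mulVec_sVec, zero_smul, NormedSpace.exp_zero, Matrix.one_mulVec, phaseState_apply,
    norm_mul, Complex.norm_exp_ofReal_mul_I, one_mul, sVec, Complex.norm_real, Real.norm_eq_abs,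
    sq_abs, inv_sqrt_two_pow_sq, mul_comm]

theorem inner_phaseState_mixer_apply (c : Bits n → ℝ) (γ : ℝ) (x : Bits n) :
    inner ℝ (phaseState c γ x) ((((-Complex.I) • Bop n) *ᵥ phaseState c γ) x) =
      -(1 / 2 ^ n) * ∑ j, Real.sin (γ * pd c j x) := by
  rw [Matrix.smul_mulVec, Pi.smul_apply, Bop_mulVec, Complex.inner]
  simp only [phaseState_apply, sVec, smul_eq_mul, Finset.mul_sum, Finset.sum_mul, Complex.re_sum]
  refine Finset.sum_congr rfl fun j _ => ?_
  rw [Complex.re_neg_I_mul_exp_mul_conj_exp, ← inv_sqrt_two_pow_sq,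
    show -(γ * c (flipBit j x)) - -(γ * c x) = -(γ * pd c j x) by rw [pd]; ring, Real.sin_neg]
  ring

theorem hasDerivAt_P1 (c : Bits n → ℝ) (γ : ℝ) (x : Bits n) :
    HasDerivAt (P1 c x γ) (-2 / 2 ^ n * ∑ j, Real.sin (γ * pd c j x)) 0 := by
  have h := (Matrix.hasDerivAt_exp_smul_mulVec_apply ((-Complex.I) • Bop n)
    (phaseState c γ) x 0).norm_sq
  rw [zero_smul, NormedSpace.exp_zero, mul_one, Matrix.one_mulVec,
    inner_phaseState_mixer_apply] at h
  convert h using 1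
  · funext β
    rw [P1, Qaoa1_mulVec_sVec]
  · ring

theorem hasDerivAt_expC1 (c : Bits n → ℝ) (γ : ℝ) :
    HasDerivAt (expC1 c γ) (-2 / 2 ^ n * ∑ x, ∑ j, c x * Real.sin (γ * pd c j x)) 0 := by
  rw [show expC1 c γ = fun β => ∑ x, c x * P1 c x γ β from funext (expC1_eq_sum_P1 c γ)]
  refine (HasDerivAt.fun_sum fun x _ => (hasDerivAt_P1 c γ x).const_mul (c x)).congr_deriv ?_
  simp only [Finset.mul_sum]
  refine Finset.sum_congr rfl fun x _ => Finset.sum_congr rfl fun j _ => ?_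
  ring

end QAOA

theorem stmt19_general (n : ℕ) (c : Bits n → ℝ) (hc : ∃ x y : Bits n, c x ≠ c y) :
    (∃ γ β : ℝ, expC1 c γ β > (1 / 2 ^ n) * ∑ x : Bits n, c x) ∧
    (∃ γ β : ℝ, expC1 c γ β < (1 / 2 ^ n) * ∑ x : Bits n, c x) := by
  have hS := QAOA.sum_pd_sq_pos hc
  obtain ⟨γ, hγ⟩ :=
    (exists_lt_and_gt_of_hasDerivAt (QAOA.hasDerivAt_sum_mul_sin_pd c) (by linarith)).1
  simp only [zero_mul, Real.sin_zero, mul_zero, Finset.sum_const_zero] at hγ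
  obtain ⟨⟨β₁, h₁⟩, β₂, h₂⟩ :=
    exists_lt_and_gt_of_hasDerivAt (QAOA.hasDerivAt_expC1 c γ)
      (mul_ne_zero (div_ne_zero (by norm_num) (by positivity)) hγ.ne)
  rw [QAOA.expC1_zero_right] at h₁ h₂
  exact ⟨⟨γ, β₂, h₂⟩, γ, β₁, h₁⟩

theorem stmt19 (n : ℕ) (hn : 1 ≤ n) (c : Bits n → ℝ) (hc : ∃ x y : Bits n, c x ≠ c y) :
    (∃ γ β : ℝ, expC1 c γ β > (1 / 2 ^ n) * ∑ x : Bits n, c x) ∧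
    (∃ γ β : ℝ, expC1 c γ β < (1 / 2 ^ n) * ∑ x : Bits n, c x) :=
  stmt19_general n c hc
end
end
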